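/- arXiv:2204.08782 — 5 statements merged into one kernel-verified Lean document; each statement's English description precedes it below -/
import Mathlib

section
/- Let n ∈ ℕ be even, and define F_k^n = (1/2^n) · binom(k, k/2) · binom(n−k, (n−k)/2) for even k ≤ n, and F_k^n = 0 otherwise. Then ∑_{k=0}^{n} F_k^n = 1. -/
open Finset

private lemma desc_neg_one (n : ℕ) :
    (descPochhammer ℤ n).smeval (-1 : ℝ) = (-1)^n * n.factorial := by
  induction n with
  | zero => simp
  | succ n ih =>
    rw [descPochhammer_succ_right, Polynomial.smeval_mul, ih, Polynomial.smeval_sub,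
      Polynomial.smeval_X, Polynomial.smeval_natCast, Nat.factorial_succ]
    push_cast
    ring

private lemma ring_choose_neg_one (n : ℕ) : Ring.choose (-1 : ℝ) n = (-1)^n := by
  have h := Ring.descPochhammer_eq_factorial_smul_choose (-1 : ℝ) n
  rw [desc_neg_one, nsmul_eq_mul] at h
  have hf : (n.factorial : ℝ) ≠ 0 := by exact_mod_cast n.factorial_ne_zero
  apply mul_left_cancel₀ hf
  rw [← h]; ring

private lemma desc_neg_half (n : ℕ) :
    (descPochhammer ℤ n).smeval (-1/2 : ℝ) =
      (-1/4)^n * n.factorial * Nat.centralBinom n := by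
  induction n with
  | zero => simp
  | succ n ih =>
    rw [descPochhammer_succ_right, Polynomial.smeval_mul, ih, Polynomial.smeval_sub,
      Polynomial.smeval_X, Polynomial.smeval_natCast]
    have hrec := Nat.succ_mul_centralBinom_succ n
    have hrec' : ((n+1 : ℕ) : ℝ) * (Nat.centralBinom (n+1) : ℝ)
        = 2 * (2*n+1) * Nat.centralBinom n := by exact_mod_cast congrArg (Nat.cast (R := ℝ)) hrec
    have hn1 : ((n:ℝ)+1) ≠ 0 := by positivity
    have : (Nat.centralBinom (n+1) : ℝ) = 2 * (2*n+1) * Nat.centralBinom n / ((n:ℝ)+1) := by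
      field_simp
      push_cast at hrec' ⊢
      linarith [hrec']
    rw [Nat.factorial_succ, this]
    push_cast
    field_simp
    ring

private lemma ring_choose_neg_half (n : ℕ) :
    Ring.choose (-1/2 : ℝ) n = (-1/4)^n * Nat.centralBinom n := by
  have h := Ring.descPochhammer_eq_factorial_smul_choose (-1/2 : ℝ) n
  rw [desc_neg_half, nsmul_eq_mul] at h
  have hf : (n.factorial : ℝ) ≠ 0 := by exact_mod_cast n.factorial_ne_zero
  apply mul_left_cancel₀ hf
  rw [← h]; ring

private lemma central_conv (m : ℕ) :
    ∑ j ∈ range (m+1), (Nat.centralBinom j : ℝ) * Nat.centralBinom (m - j) = 4^m := by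
  have h := Ring.add_choose_eq (R := ℝ) (r := -1/2) (s := -1/2) m (Commute.all _ _)
  rw [show (-1/2 : ℝ) + (-1/2) = -1 by norm_num, ring_choose_neg_one] at h
  rw [Finset.Nat.sum_antidiagonal_eq_sum_range_succ_mk] at h
  simp only [ring_choose_neg_half] at h
  have h4 : ((-1:ℝ)/4)^m ≠ 0 := by norm_num
  have key : ∀ j ∈ range (m+1),
      (-1/4:ℝ)^j * Nat.centralBinom j * ((-1/4)^(m-j) * Nat.centralBinom (m-j))
      = (-1/4)^m * ((Nat.centralBinom j : ℝ) * Nat.centralBinom (m-j)) := by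
    intro j hj
    have hle : j ≤ m := Nat.lt_succ_iff.mp (mem_range.mp hj)
    rw [show (-1/4:ℝ)^j * Nat.centralBinom j * ((-1/4)^(m-j) * Nat.centralBinom (m-j))
        = (-1/4:ℝ)^j * (-1/4)^(m-j) * ((Nat.centralBinom j : ℝ) * Nat.centralBinom (m-j)) by ring,
      ← pow_add, Nat.add_sub_cancel' hle]
  rw [Finset.sum_congr rfl key, ← Finset.mul_sum] at h
  have : ((-1:ℝ))^m = (-1/4)^m * 4^m := by
    rw [show (-1/4 : ℝ)^m * 4^m = ((-1/4) * 4)^m by rw [mul_pow]]; norm_num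
  rw [this] at h
  exact mul_left_cancel₀ h4 h.symm

/-- for even `n`, with `F_k^n = (1/2^n) C(k,k/2) C(n-k,(n-k)/2)` for even
`k ≤ n` and `0` otherwise, one has `∑_{k=0}^n F_k^n = 1`. -/
theorem sum_Fkn_even (n : ℕ) (hn : Even n) :
    ∑ k ∈ Finset.range (n + 1),
      (if Even k then
        (1 / 2 ^ n : ℝ) * (Nat.choose k (k / 2) : ℝ) * (Nat.choose (n - k) ((n - k) / 2) : ℝ)
      else 0) = 1 := by
  obtain ⟨m, rfl⟩ := hn
  rw [show m + m = 2 * m by ring]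
  -- reduce even-indexed sum over range (2m+1) to sum over range (m+1)
  have reindex : ∀ (g : ℕ → ℝ), (∀ k, ¬ Even k → g k = 0) →
      ∀ M, ∑ k ∈ range (2*M+1), g k = ∑ j ∈ range (M+1), g (2*j) := by
    intro g hg M
    induction M with
    | zero => simp
    | succ M ih =>
      rw [show 2*(M+1)+1 = (2*M+1) + 1 + 1 by ring, Finset.sum_range_succ,
        Finset.sum_range_succ, ih, hg (2*M+1) (by simp [Nat.even_add_one, parity_simps]),
        Finset.sum_range_succ, show (2*M+1)+1 = 2*(M+1) by ring]
      simp [Finset.sum_range_succ]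
  rw [reindex _ (fun k hk => by simp [hk]) m]
  have step : ∀ j ∈ range (m+1),
      (if Even (2*j) then
        (1 / 2 ^ (2*m) : ℝ) * (Nat.choose (2*j) ((2*j) / 2) : ℝ)
          * (Nat.choose (2*m - 2*j) ((2*m - 2*j) / 2) : ℝ)
      else 0)
      = (1/4^m : ℝ) * ((Nat.centralBinom j : ℝ) * Nat.centralBinom (m - j)) := by
    intro j hj
    have hle : j ≤ m := Nat.lt_succ_iff.mp (mem_range.mp hj)
    rw [if_pos (even_two_mul j)]
    rw [show 2*m - 2*j = 2*(m-j) by omega, Nat.mul_div_cancel_left _ two_pos,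
      Nat.mul_div_cancel_left _ two_pos, Nat.centralBinom, Nat.centralBinom]
    rw [show (2:ℝ)^(2*m) = 4^m by rw [pow_mul]; norm_num]
    ring
  rw [Finset.sum_congr rfl step, ← Finset.mul_sum, central_conv]
  have : (4:ℝ)^m ≠ 0 := by positivity
  field_simp
end

section
/- Let n ∈ ℕ be odd, and define F_k^n = (1/2^n) · binom(n, ⌊n/2⌋) · binom(⌊n/2⌋, ⌊k/2⌋)² / binom(n, k) for k ≤ n, and F_k^n = 0 for k > n. Then ∑_{k=0}^{n} F_k^n = 1. -/
noncomputable def cb (j : ℕ) : ℝ := ((2 * j).choose j : ℝ)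

lemma cb_eq (j : ℕ) : cb j = (Nat.centralBinom j : ℝ) := by
  simp [cb, Nat.centralBinom]

lemma cb_rec (n : ℕ) : ((n : ℝ) + 1) * cb (n + 1) = 2 * (2 * n + 1) * cb n := by
  have h := Nat.succ_mul_centralBinom_succ n
  have : (((n + 1) * Nat.centralBinom (n + 1) : ℕ) : ℝ) =
      ((2 * (2 * n + 1) * Nat.centralBinom n : ℕ) : ℝ) := by exact_mod_cast h
  push_cast at this
  rw [cb_eq, cb_eq]
  linarith [this]

lemma twoA (m : ℕ) :
    2 * ∑ j ∈ Finset.range (m + 1), (j : ℝ) * (cb j * cb (m - j)) =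
      (m : ℝ) * ∑ j ∈ Finset.range (m + 1), cb j * cb (m - j) := by
  have h := Finset.sum_range_reflect (fun j => (j : ℝ) * (cb j * cb (m - j))) (m + 1)
  simp only [add_tsub_cancel_right] at h
  rw [two_mul]
  nth_rewrite 1 [← h]
  rw [← Finset.sum_add_distrib, Finset.mul_sum]
  apply Finset.sum_congr rfl
  intro j hj
  have hjm : j ≤ m := by simpa [Nat.lt_succ_iff] using hj
  have h1 : m - (m - j) = j := by omega
  rw [h1]
  have h2 : ((m - j : ℕ) : ℝ) = (m : ℝ) - j := by
    push_cast [Nat.cast_sub hjm]; ring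
  rw [h2]
  ring

lemma conv_central (m : ℕ) :
    ∑ j ∈ Finset.range (m + 1), cb j * cb (m - j) = 4 ^ m := by
  induction m with
  | zero => simp [cb]
  | succ m ih =>
    -- T = ∑_{j=0}^{m+1} ((m+1) - j) * cb j * cb (m+1-j)
    have hT1 : ∑ j ∈ Finset.range (m + 2), (((m : ℝ) + 1) - j) * (cb j * cb (m + 1 - j)) =
        ((m : ℝ) + 1) * ∑ j ∈ Finset.range (m + 2), cb j * cb (m + 1 - j) -
          ∑ j ∈ Finset.range (m + 2), (j : ℝ) * (cb j * cb (m + 1 - j)) := by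
      rw [Finset.mul_sum, ← Finset.sum_sub_distrib]
      apply Finset.sum_congr rfl
      intro j _
      ring
    have hT2 : ∑ j ∈ Finset.range (m + 2), (((m : ℝ) + 1) - j) * (cb j * cb (m + 1 - j)) =
        ∑ j ∈ Finset.range (m + 1), 2 * (2 * ((m : ℝ) - j) + 1) * (cb j * cb (m - j)) := by
      rw [Finset.sum_range_succ]
      have hlast : (((m : ℝ) + 1) - (m + 1 : ℕ)) * (cb (m + 1) * cb (m + 1 - (m + 1))) = 0 := by
        push_cast; ring
      rw [hlast, add_zero]
      apply Finset.sum_congr rfl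
      intro j hj
      have hjm : j ≤ m := by simpa [Nat.lt_succ_iff] using hj
      have h1 : m + 1 - j = (m - j) + 1 := by omega
      rw [h1]
      have h2 : ((m : ℝ) + 1) - j = ((m - j : ℕ) : ℝ) + 1 := by
        push_cast [Nat.cast_sub hjm]; ring
      have h3 : ((m : ℝ) - j) = ((m - j : ℕ) : ℝ) := by
        push_cast [Nat.cast_sub hjm]; ring
      rw [h2, h3]
      have := cb_rec (m - j)
      calc (((m - j : ℕ) : ℝ) + 1) * (cb j * cb (m - j + 1))
          = cb j * ((((m - j : ℕ) : ℝ) + 1) * cb (m - j + 1)) := by ring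
        _ = cb j * (2 * (2 * ((m - j : ℕ) : ℝ) + 1) * cb (m - j)) := by rw [this]
        _ = 2 * (2 * ((m - j : ℕ) : ℝ) + 1) * (cb j * cb (m - j)) := by ring
    -- expand RHS of hT2
    have hT3 : ∑ j ∈ Finset.range (m + 1), 2 * (2 * ((m : ℝ) - j) + 1) * (cb j * cb (m - j)) =
        (4 * m + 2) * ∑ j ∈ Finset.range (m + 1), cb j * cb (m - j) -
          4 * ∑ j ∈ Finset.range (m + 1), (j : ℝ) * (cb j * cb (m - j)) := by
      rw [Finset.mul_sum, Finset.mul_sum, ← Finset.sum_sub_distrib]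
      apply Finset.sum_congr rfl
      intro j _
      ring
    have hA := twoA m
    have hA' := twoA (m + 1)
    push_cast at hA'
    set S := ∑ j ∈ Finset.range (m + 1), cb j * cb (m - j) with hS
    set S' := ∑ j ∈ Finset.range (m + 2), cb j * cb (m + 1 - j) with hS'
    set A := ∑ j ∈ Finset.range (m + 1), (j : ℝ) * (cb j * cb (m - j)) with hAdef
    set A' := ∑ j ∈ Finset.range (m + 2), (j : ℝ) * (cb j * cb (m + 1 - j)) with hA'def
    -- combine: ((m+1) S' - A') = (4m+2) S - 4 A
    have key : ((m : ℝ) + 1) * S' - A' = (4 * m + 2) * S - 4 * A := by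
      rw [← hT1, hT2, hT3]
    -- 2A = m S, 2A' = (m+1) S'
    have hm : S = 4 ^ m := ih
    -- derive S' = 4 * S
    have hfinal : ((m : ℝ) + 1) * S' = 4 * ((m : ℝ) + 1) * S := by nlinarith [key, hA, hA']
    have hm1 : ((m : ℝ) + 1) ≠ 0 := by positivity
    have : S' = 4 * S := by
      field_simp at hfinal
      nlinarith [hfinal]
    rw [this, hm]
    ring

lemma sum_pair (f : ℕ → ℝ) (m : ℕ) :
    ∑ k ∈ Finset.range (2 * m + 2), f k =
      ∑ j ∈ Finset.range (m + 1), (f (2 * j) + f (2 * j + 1)) := by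
  induction m with
  | zero => simp [Finset.sum_range_succ]
  | succ m ih =>
    have h : 2 * (m + 1) + 2 = (2 * m + 2) + 1 + 1 := by ring
    rw [h, Finset.sum_range_succ, Finset.sum_range_succ, ih]
    conv_rhs => rw [Finset.sum_range_succ]
    have h1 : 2 * m + 2 = 2 * (m + 1) := by ring
    have h2 : 2 * m + 2 + 1 = 2 * (m + 1) + 1 := by ring
    rw [h1, h2]
    ring

lemma pair_val (j d : ℕ) :
    (1 / 2 ^ (2 * (j + d) + 1) : ℝ) * ((2 * (j + d) + 1).choose (j + d) : ℝ) *
        (((j + d).choose j : ℝ)) ^ 2 / (((2 * (j + d) + 1).choose (2 * j) : ℝ)) +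
      (1 / 2 ^ (2 * (j + d) + 1) : ℝ) * ((2 * (j + d) + 1).choose (j + d) : ℝ) *
        (((j + d).choose j : ℝ)) ^ 2 / (((2 * (j + d) + 1).choose (2 * j + 1) : ℝ)) =
      ((2 * j).choose j : ℝ) * ((2 * d).choose d : ℝ) / 4 ^ (j + d) := by
  rw [Nat.cast_choose ℝ (show j + d ≤ 2 * (j + d) + 1 by omega),
    Nat.cast_choose ℝ (show j ≤ j + d by omega),
    Nat.cast_choose ℝ (show 2 * j ≤ 2 * (j + d) + 1 by omega),
    Nat.cast_choose ℝ (show 2 * j + 1 ≤ 2 * (j + d) + 1 by omega),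
    Nat.cast_choose ℝ (show j ≤ 2 * j by omega),
    Nat.cast_choose ℝ (show d ≤ 2 * d by omega)]
  have e1 : 2 * (j + d) + 1 - (j + d) = (j + d) + 1 := by omega
  have e2 : j + d - j = d := by omega
  have e3 : 2 * (j + d) + 1 - 2 * j = 2 * d + 1 := by omega
  have e4 : 2 * (j + d) + 1 - (2 * j + 1) = 2 * d := by omega
  have e5 : 2 * j - j = j := by omega
  have e6 : 2 * d - d = d := by omega
  rw [e1, e2, e3, e4, e5, e6]
  rw [Nat.factorial_succ (j + d), Nat.factorial_succ (2 * d), Nat.factorial_succ (2 * j)]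
  have h4 : (4 : ℝ) ^ (j + d) = 2 ^ (2 * (j + d)) := by
    rw [show (4 : ℝ) = 2 ^ 2 by norm_num, ← pow_mul]
  rw [h4]
  have f1 : ((2 * (j + d) + 1).factorial : ℝ) ≠ 0 := by positivity
  have f2 : ((j + d).factorial : ℝ) ≠ 0 := by positivity
  have f3 : (j.factorial : ℝ) ≠ 0 := by positivity
  have f4 : (d.factorial : ℝ) ≠ 0 := by positivity
  have f5 : ((2 * j).factorial : ℝ) ≠ 0 := by positivity
  have f6 : ((2 * d).factorial : ℝ) ≠ 0 := by positivity
  have f7 : ((j : ℝ) + d + 1) ≠ 0 := by positivity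
  have f8 : (2 * (j : ℝ) + 1) ≠ 0 := by positivity
  have f9 : (2 * (d : ℝ) + 1) ≠ 0 := by positivity
  have f10 : (2 : ℝ) ^ (2 * (j + d) + 1) ≠ 0 := by positivity
  push_cast
  field_simp
  ring

/-- for odd `n`, with
`F_k^n = (1/2^n) C(n,⌊n/2⌋) C(⌊n/2⌋,⌊k/2⌋)² / C(n,k)` for `k ≤ n`,
one has `∑_{k=0}^n F_k^n = 1`. -/
theorem sum_Fkn_odd (n : ℕ) (hn : Odd n) :
    ∑ k ∈ Finset.range (n + 1),
      (1 / 2 ^ n : ℝ) * (Nat.choose n (n / 2) : ℝ) * (Nat.choose (n / 2) (k / 2) : ℝ) ^ 2 /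
        (Nat.choose n k : ℝ) = 1 := by
  obtain ⟨m, rfl⟩ := hn
  have hdiv : (2 * m + 1) / 2 = m := by omega
  rw [hdiv]
  have hrange : 2 * m + 1 + 1 = 2 * m + 2 := by ring
  rw [hrange, sum_pair]
  have hterm : ∀ j ∈ Finset.range (m + 1),
      ((1 / 2 ^ (2 * m + 1) : ℝ) * ((2 * m + 1).choose m : ℝ) * ((m.choose ((2 * j) / 2)) : ℝ) ^ 2 /
          (((2 * m + 1).choose (2 * j)) : ℝ) +
        (1 / 2 ^ (2 * m + 1) : ℝ) * ((2 * m + 1).choose m : ℝ) *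
          ((m.choose ((2 * j + 1) / 2)) : ℝ) ^ 2 / (((2 * m + 1).choose (2 * j + 1)) : ℝ)) =
      cb j * cb (m - j) / 4 ^ m := by
    intro j hj
    have hjm : j ≤ m := by simpa [Nat.lt_succ_iff] using hj
    obtain ⟨d, rfl⟩ := Nat.exists_eq_add_of_le hjm
    have hd1 : (2 * j) / 2 = j := by omega
    have hd2 : (2 * j + 1) / 2 = j := by omega
    rw [hd1, hd2]
    have hsub : j + d - j = d := by omega
    have := pair_val j d
    simp only [cb, hsub]
    convert this using 4 <;> ring
  rw [Finset.sum_congr rfl hterm]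
  simp only [div_eq_mul_inv, ← Finset.sum_mul]
  rw [← div_eq_mul_inv, conv_central]
  have : (4 : ℝ) ^ m ≠ 0 := by positivity
  field_simp
end

section
/- Let ρ be a state on an M-fold tensor product Hilbert space, |n⟩ = |n₁⟩⊗⋯⊗|n_M⟩ a product pure state, and let Fᵢ = ⟨nᵢ| Trᵢᶜ(ρ) |nᵢ⟩ be the fidelity of the i-th single-mode reduced state of ρ with |nᵢ⟩. Define F̃ = 1 − ∑_{i=1}^M (1 − Fᵢ). Then 1 − M(1 − F(ρ,|n⟩)) ≤ F̃ ≤ F(ρ,|n⟩), where F(ρ,|n⟩) = ⟨n|ρ|n⟩. -/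
/-!
In the product basis the diagonal `f ↦ (ρ f f).re` of `ρ` is a probability distribution on
configurations `f`. Then `F = ⟨n|ρ|n⟩` is the probability of `f = n` and `1 − Fᵢ` the probability
of `f i ≠ n i`. The event `f ≠ n` is the union of the `M` events `f i ≠ n i` and contains each of
them, so the union bound gives `F̃ ≤ F` and monotonicity gives `1 − M(1 − F) ≤ F̃`.
-/

open scoped ComplexOrder
open Finset

theorem Matrix.PosSemidef.re_diag_nonneg {m : Type*} [Fintype m] {A : Matrix m m ℂ}
    (hA : A.PosSemidef) (i : m) : 0 ≤ (A i i).re :=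
  (Complex.nonneg_iff.mp hA.diag_nonneg).1

theorem Matrix.sum_re_diag_eq_one_of_trace_eq_one {m : Type*} [Fintype m] {A : Matrix m m ℂ}
    (htr : A.trace = 1) : ∑ i, (A i i).re = 1 := by
  rw [← Complex.re_sum]
  exact congrArg Complex.re htr

theorem one_sub_sum_filter_eq_sum_filter_not {Ω : Type*} [Fintype Ω] {p : Ω → ℝ}
    (hsum : ∑ ω, p ω = 1) (P : Ω → Prop) [DecidablePred P] :
    1 - ∑ ω with P ω, p ω = ∑ ω with ¬P ω, p ω := by
  rw [← hsum, ← sum_filter_add_sum_filter_not univ P p, add_sub_cancel_left]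

section Configurations

variable {ι α : Type*} [Fintype ι] [DecidableEq ι] [Fintype α] [DecidableEq α]

theorem sum_filter_apply_ne_le_sum_filter_ne {p : (ι → α) → ℝ} (hp : ∀ f, 0 ≤ p f)
    (n : ι → α) (i : ι) :
    ∑ f with f i ≠ n i, p f ≤ ∑ f with f ≠ n, p f :=
  sum_le_sum_of_subset_of_nonneg
    (fun f hf ↦ mem_filter.mpr ⟨mem_univ f, fun h ↦ (mem_filter.mp hf).2 (h ▸ rfl)⟩)
    fun f _ _ ↦ hp f

theorem sum_filter_ne_le_sum_sum_filter_apply_ne {p : (ι → α) → ℝ} (hp : ∀ f, 0 ≤ p f)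
    (n : ι → α) :
    ∑ f with f ≠ n, p f ≤ ∑ i, ∑ f with f i ≠ n i, p f := by
  calc ∑ f with f ≠ n, p f ≤ ∑ f with f ≠ n, ∑ i with f i ≠ n i, p f := by
        gcongr with f hf
        obtain ⟨j, hj⟩ := Function.ne_iff.mp (mem_filter.mp hf).2
        exact single_le_sum (f := fun _ ↦ p f) (fun _ _ ↦ hp f) (mem_filter.mpr ⟨mem_univ j, hj⟩)
    _ = ∑ f, ∑ i with f i ≠ n i, p f :=
        sum_filter_of_ne fun f _ hf h ↦ hf (by simp [h])
    _ = ∑ i, ∑ f with f i ≠ n i, p f := by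
        simp only [sum_filter]
        exact sum_comm

/-- On the terms that survive, `Function.update f i (n i) = f`: the single-mode fidelity only
reads the diagonal of `A`. -/
theorem re_sum_ite_apply_update_eq (A : Matrix (ι → α) (ι → α) ℂ) (n : ι → α) (i : ι) :
    (∑ f : ι → α, if f i = n i then A f (Function.update f i (n i)) else 0).re =
      ∑ f with f i = n i, (A f f).re := by
  rw [← sum_filter, Complex.re_sum]
  refine sum_congr rfl fun f hf ↦ ?_
  rw [← (mem_filter.mp hf).2, Function.update_eq_self]

end Configurations

/-- robust fidelity bounds. For a density matrix `ρ` on `M` modes of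
dimension `d` (basis indexed by `Fin M → Fin d`) and a product basis state `|n⟩`, with
`Fᵢ = ⟨nᵢ|Tr_{ iᶜ}(ρ)|nᵢ⟩` the single-mode reduced fidelities and
`F̃ = 1 − ∑ᵢ (1 − Fᵢ)`, one has `1 − M(1 − F) ≤ F̃ ≤ F` where `F = ⟨n|ρ|n⟩`. -/
theorem robust_fidelity_bounds (M d : ℕ)
    (ρ : Matrix (Fin M → Fin d) (Fin M → Fin d) ℂ)
    (hpsd : ρ.PosSemidef) (htr : ρ.trace = 1) (n : Fin M → Fin d)
    (Fi : Fin M → ℝ)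
    (hFi : ∀ i, Fi i =
      (∑ f : Fin M → Fin d, if f i = n i then ρ f (Function.update f i (n i)) else 0).re) :
    1 - (M : ℝ) * (1 - (ρ n n).re) ≤ 1 - ∑ i, (1 - Fi i) ∧
      1 - ∑ i, (1 - Fi i) ≤ (ρ n n).re := by
  set p : (Fin M → Fin d) → ℝ := fun f ↦ (ρ f f).re
  have hp : ∀ f, 0 ≤ p f := hpsd.re_diag_nonneg
  have hsum : ∑ f, p f = 1 := Matrix.sum_re_diag_eq_one_of_trace_eq_one htr
  have hmode : ∀ i, 1 - Fi i = ∑ f with f i ≠ n i, p f := fun i ↦ by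
    rw [hFi, re_sum_ite_apply_update_eq, one_sub_sum_filter_eq_sum_filter_not hsum]
  have hglobal : 1 - p n = ∑ f with f ≠ n, p f := by
    rw [← one_sub_sum_filter_eq_sum_filter_not hsum, filter_eq', if_pos (mem_univ n),
      sum_singleton]
  rw [sum_congr rfl fun i _ ↦ hmode i]
  constructor
  · have hle : ∑ i, ∑ f with f i ≠ n i, p f ≤ ∑ _i : Fin M, (1 - p n) :=
      sum_le_sum fun i _ ↦ hglobal ▸ sum_filter_apply_ne_le_sum_filter_ne hp n i
    rw [sum_const, card_univ, Fintype.card_fin, nsmul_eq_mul] at hle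
    linarith
  · linarith [sum_filter_ne_le_sum_sum_filter_apply_ne hp n]
end

section
/- Suppose μ = (μ_k)_{k ≤ m} are reals with μ_k ≤ 1 for all k, and suppose for every multi-index l ≤ m we have ∑_{k ≤ l} μ_k F_k^l ≥ 0, where F^l = (F_k^l)_{k ≤ l} are nonnegative coefficients with ∑_{k ≤ l} F_k^l = 1 and F_l^l ≥ 1/π_l with π_l = ∏ᵢ(lᵢ+1). Then for every multi-index l ≤ m, μ_l ≥ 1 − π_l. -/
/-- if `μ_k ≤ 1` for all `k ≤ m` and for every `l ≤ m` the pairing with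
the nonnegative probability vector `F^l` (with `F_l^l ≥ 1/π_l`) is nonnegative, then
`μ_l ≥ 1 − π_l` for every `l ≤ m`, where `π_l = ∏ᵢ (lᵢ+1)`. -/
theorem mu_lower_bound (M : ℕ) (m : Fin M → ℕ) (μ : (Fin M → ℕ) → ℝ)
    (F : (Fin M → ℕ) → (Fin M → ℕ) → ℝ)
    (hμ : ∀ k ∈ Finset.Iic m, μ k ≤ 1)
    (hFpos : ∀ l ∈ Finset.Iic m, ∀ k ∈ Finset.Iic l, 0 ≤ F l k)
    (hFsum : ∀ l ∈ Finset.Iic m, ∑ k ∈ Finset.Iic l, F l k = 1)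
    (hFll : ∀ l ∈ Finset.Iic m, F l l ≥ 1 / ∏ i, ((l i : ℝ) + 1))
    (hpair : ∀ l ∈ Finset.Iic m, 0 ≤ ∑ k ∈ Finset.Iic l, μ k * F l k) :
    ∀ l ∈ Finset.Iic m, μ l ≥ 1 - ∏ i, ((l i : ℝ) + 1) := by
  intro l hl
  set π : ℝ := ∏ i, ((l i : ℝ) + 1) with hπ
  have hπpos : 0 < π := by
    apply Finset.prod_pos
    intro i _
    positivity
  have hFllpos : 0 < F l l := lt_of_lt_of_le (by positivity) (hFll l hl)
  have hll : l ∈ Finset.Iic l := Finset.mem_Iic.mpr le_rfl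
  -- bound the off-diagonal part
  have hrest : ∑ k ∈ (Finset.Iic l).erase l, μ k * F l k ≤ 1 - F l l := by
    have h1 : ∑ k ∈ (Finset.Iic l).erase l, μ k * F l k ≤
        ∑ k ∈ (Finset.Iic l).erase l, F l k := by
      apply Finset.sum_le_sum
      intro k hk
      have hk' := Finset.mem_of_mem_erase hk
      have hkm : k ∈ Finset.Iic m := Finset.mem_Iic.mpr
        (le_trans (Finset.mem_Iic.mp hk') (Finset.mem_Iic.mp hl))
      have := hFpos l hl k hk'
      nlinarith [hμ k hkm]
    have h2 : ∑ k ∈ (Finset.Iic l).erase l, F l k = 1 - F l l := by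
      have := Finset.add_sum_erase _ (F l) hll
      have hs := hFsum l hl
      linarith
    linarith
  have hsplit : ∑ k ∈ Finset.Iic l, μ k * F l k
      = μ l * F l l + ∑ k ∈ (Finset.Iic l).erase l, μ k * F l k :=
    (Finset.add_sum_erase _ (fun k => μ k * F l k) hll).symm
  have hkey : μ l * F l l ≥ F l l - 1 := by
    have := hpair l hl
    rw [hsplit] at this
    linarith
  -- μ l ≥ 1 - 1 / F l l ≥ 1 - π
  have hinv : 1 / F l l ≤ π := by
    rw [div_le_iff₀ hFllpos]
    have := hFll l hl
    calc (1:ℝ) = π * (1/π) := by field_simp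
    _ ≤ π * F l l := by
        apply mul_le_mul_of_nonneg_left this (le_of_lt hπpos)
  have hπF : 1 ≤ π * F l l := (div_le_iff₀ hFllpos).mp hinv
  nlinarith [hkey, hπF, hFllpos]
end

section
/- If for each p = 1,…,M the pair (Q⁽ᵖ⁾, F(m_p,n_p)) is a strictly feasible solution of the single-mode restriction SDP at level m_p (i.e., Q⁽ᵖ⁾ ≻ 0, F_k(m_p,n_p) > 0 for all k ≤ m_p, ∑_k F_k(m_p,n_p) = 1, and the linear antidiagonal constraints hold), then the tensor product Q = Q⁽¹⁾⊗⋯⊗Q⁽ᴹ⁾ and the product vector F_k = ∏_p F_{k_p}(m_p,n_p) form a strictly feasible solution of the multimode restriction SDP at level m = (m₁,…,m_M): Q ≻ 0, F_k > 0, ∑_{k≤m} F_k = 1, and for all l ≤ m, ∑_{i+j=2l} Q_{ij} = ∑_{k≥l} ((−1)^{|k|+|l|}/l!) binom(k,l) F_k, and ∑_{i+j=r} Q_{ij} = 0 for r ≤ 2m not of the form 2l. -/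
/-- Strict feasibility for the single-mode restriction SDP at level `m'` with target `n'`:
`Q ≻ 0`, `F` strictly positive on `{0,…,m'}` and summing to one, the even antidiagonal
constraints hold, and odd antidiagonal sums vanish. -/
def StrictFeas1 (m' n' : ℕ) (Q : Matrix (Fin (m' + 1)) (Fin (m' + 1)) ℝ) (F : ℕ → ℝ) :
    Prop :=
  n' ≤ m' ∧ Q.PosDef ∧ (∀ k, k ≤ m' → 0 < F k) ∧
    (∑ k ∈ Finset.range (m' + 1), F k) = 1 ∧
    (∀ l : ℕ, l ≤ m' →
      (∑ a : Fin (m' + 1), ∑ b : Fin (m' + 1),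
          if (a : ℕ) + (b : ℕ) = 2 * l then Q a b else 0) =
        ∑ k ∈ Finset.Icc l m',
          ((-1) ^ (k + l) / (Nat.factorial l : ℝ)) * (Nat.choose k l : ℝ) * F k) ∧
    (∀ r : ℕ, r ≤ 2 * m' → Odd r →
      (∑ a : Fin (m' + 1), ∑ b : Fin (m' + 1),
        if (a : ℕ) + (b : ℕ) = r then Q a b else 0) = 0)

/-!
The Kronecker product `A ↦ ⊗ₚ Aₚ` is multiplicative and commutes with `ᴴ`. Writing
`Qₚ = Bₚᴴ Bₚ` gives `⊗ Q = (⊗ B)ᴴ (⊗ B) ⪰ 0`, and `⊗ Q` is a unit because each `Qₚ` is, so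
`⊗ Q ≻ 0`. Every other condition factorises over the modes: the constraint `i + j = r` is
coordinatewise, so each multimode antidiagonal sum is the product of the single-mode ones, and
the multimode right-hand side is the product of the single-mode right-hand sides.
-/

open Finset

namespace Matrix

variable {ι R : Type*} [Fintype ι] {l m n : ι → Type*}

def piKronecker [CommSemiring R] (A : ∀ i, Matrix (l i) (m i) R) :
    Matrix (∀ i, l i) (∀ i, m i) R :=
  of fun x y => ∏ i, A i (x i) (y i)

theorem piKronecker_mul [DecidableEq ι] [CommSemiring R] [∀ i, Fintype (m i)]
    (A : ∀ i, Matrix (l i) (m i) R) (B : ∀ i, Matrix (m i) (n i) R) :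
    piKronecker A * piKronecker B = piKronecker fun i => A i * B i := by
  ext x z
  simp only [mul_apply, piKronecker, of_apply, ← prod_mul_distrib, Fintype.prod_sum]

theorem piKronecker_one [CommSemiring R] [∀ i, DecidableEq (m i)] :
    piKronecker (fun i => (1 : Matrix (m i) (m i) R)) = 1 := by
  ext x y
  simp only [piKronecker, of_apply, one_apply, Fintype.prod_boole, funext_iff]

theorem conjTranspose_piKronecker [CommSemiring R] [StarRing R] (A : ∀ i, Matrix (l i) (m i) R) :
    (piKronecker A)ᴴ = piKronecker fun i => (A i)ᴴ := by
  ext x y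
  simp [piKronecker, conjTranspose_apply, star_prod]

variable (R m) in
def piKroneckerMonoidHom [DecidableEq ι] [CommSemiring R] [∀ i, Fintype (m i)]
    [∀ i, DecidableEq (m i)] :
    (∀ i, Matrix (m i) (m i) R) →* Matrix (∀ i, m i) (∀ i, m i) R where
  toFun := piKronecker
  map_one' := piKronecker_one
  map_mul' A B := (piKronecker_mul A B).symm

variable {𝕜 : Type*} [RCLike 𝕜] [DecidableEq ι] [∀ i, Fintype (m i)]

open scoped ComplexOrder MatrixOrder

theorem PosSemidef.piKronecker {A : ∀ i, Matrix (m i) (m i) 𝕜} (hA : ∀ i, (A i).PosSemidef) :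
    (Matrix.piKronecker A).PosSemidef := by
  classical
  choose B hB using fun i => CStarAlgebra.nonneg_iff_eq_star_mul_self.mp (hA i).nonneg
  have hAB : Matrix.piKronecker A = (Matrix.piKronecker B)ᴴ * Matrix.piKronecker B := by
    rw [conjTranspose_piKronecker, piKronecker_mul]
    exact congrArg _ (funext hB)
  rw [hAB]
  exact posSemidef_conjTranspose_mul_self _

theorem PosDef.piKronecker [∀ i, DecidableEq (m i)] {A : ∀ i, Matrix (m i) (m i) 𝕜}
    (hA : ∀ i, (A i).PosDef) : (Matrix.piKronecker A).PosDef := by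
  refine (PosSemidef.piKronecker fun i => (hA i).posSemidef).posDef_iff_isUnit.mpr ?_
  exact (Pi.isUnit_iff.mpr fun i => (hA i).isUnit).map (piKroneckerMonoidHom 𝕜 m)

end Matrix

theorem Fintype.sum_sum_ite_forall_prod {ι R : Type*} [Fintype ι] [DecidableEq ι]
    [CommSemiring R] {m n : ι → Type*} [∀ i, Fintype (m i)] [∀ i, Fintype (n i)]
    (P : ∀ i, m i → n i → Prop) [∀ i a b, Decidable (P i a b)]
    [∀ (x : ∀ i, m i) (y : ∀ i, n i), Decidable (∀ i, P i (x i) (y i))] (f : ∀ i, m i → n i → R) :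
    (∑ x : ∀ i, m i, ∑ y : ∀ i, n i,
        if ∀ i, P i (x i) (y i) then ∏ i, f i (x i) (y i) else 0) =
      ∏ i, ∑ a, ∑ b, if P i a b then f i a b else 0 := by
  simp only [Fintype.prod_sum, Fintype.prod_ite_zero]
  congr!

/-- tensor products of strictly feasible single-mode solutions give a
strictly feasible solution of the multimode restriction SDP. -/
theorem tensor_strict_feasible (M : ℕ) (m n : Fin M → ℕ)
    (Q : ∀ p : Fin M, Matrix (Fin (m p + 1)) (Fin (m p + 1)) ℝ)
    (F : ∀ _ : Fin M, ℕ → ℝ)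
    (hfeas : ∀ p, StrictFeas1 (m p) (n p) (Q p) (F p)) :
    (Matrix.PosDef
        (Matrix.of fun i j : ∀ p, Fin (m p + 1) => ∏ p, Q p (i p) (j p))) ∧
      (∀ k ∈ Finset.Iic m, 0 < ∏ p, F p (k p)) ∧
      (∑ k ∈ Finset.Iic m, ∏ p, F p (k p)) = 1 ∧
      (∀ l : Fin M → ℕ, (∀ p, l p ≤ m p) →
        (∑ i : ∀ p, Fin (m p + 1), ∑ j : ∀ p, Fin (m p + 1),
            if (∀ p, (i p : ℕ) + (j p : ℕ) = 2 * l p) then ∏ p, Q p (i p) (j p) else 0) =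
          ∑ k ∈ Finset.Icc l m,
            ((-1) ^ ((∑ p, k p) + ∑ p, l p) / (∏ p, (Nat.factorial (l p) : ℝ))) *
              (∏ p, (Nat.choose (k p) (l p) : ℝ)) * ∏ p, F p (k p)) ∧
      (∀ r : Fin M → ℕ, (∀ p, r p ≤ 2 * m p) → ¬(∀ p, Even (r p)) →
        (∑ i : ∀ p, Fin (m p + 1), ∑ j : ∀ p, Fin (m p + 1),
          if (∀ p, (i p : ℕ) + (j p : ℕ) = r p) then ∏ p, Q p (i p) (j p) else 0) = 0) := by
  simp only [StrictFeas1, forall_and] at hfeas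
  obtain ⟨-, hQ, hFpos, hFsum, heven, hodd⟩ := hfeas
  refine ⟨Matrix.PosDef.piKronecker hQ, fun k hk => ?_, ?_, fun l hl => ?_,
    fun r hr hr_not_even => ?_⟩
  · exact prod_pos fun p _ => hFpos p (k p) (mem_Iic.mp hk p)
  · calc ∑ k ∈ Iic m, ∏ p, F p (k p) = ∏ p, ∑ k ∈ range (m p + 1), F p k := by
          simp_rw [Nat.range_succ_eq_Iic]
          exact (prod_univ_sum _ _).symm
      _ = 1 := prod_eq_one fun p _ => hFsum p
  · refine (Fintype.sum_sum_ite_forall_prod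
      (fun p (a b : Fin (m p + 1)) => (a : ℕ) + b = 2 * l p) fun p a b => Q p a b).trans ?_
    rw [prod_congr rfl fun p _ => heven p (l p) (hl p), prod_univ_sum, ← Pi.Icc_eq]
    refine sum_congr rfl fun k _ => ?_
    rw [prod_mul_distrib, prod_mul_distrib, prod_div_distrib, prod_pow_eq_pow_sum,
      sum_add_distrib]
  · obtain ⟨p, hp⟩ := not_forall.mp hr_not_even
    refine (Fintype.sum_sum_ite_forall_prod
      (fun p (a b : Fin (m p + 1)) => (a : ℕ) + b = r p) fun p a b => Q p a b).trans ?_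
    exact prod_eq_zero (mem_univ p) (hodd p (r p) (hr p) (Nat.not_even_iff_odd.mp hp))
end
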